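/- Let R be a compact nonnegative self-adjoint operator on a Hilbert space with eigenvalues λ_1 = ... = λ_q > λ_{q+1} ≥ ... (ordered, with orthonormal eigenbasis (φ_i) of the closure of the range plus kernel). If φ is a unit vector decomposed as φ = Σ_i c_i φ_i + v where Rv = 0, then (1 − λ_{q+1}/λ_1)·‖φ − Σ_{i=1}^q c_i φ_i‖² ≤ 1 − λ_1^{−1} ⟨Rφ, φ⟩. -/

import Mathlib

open RealInnerProductSpace

theorem eigenvector_perturbation_inequality
    {H : Type*} [NormedAddCommGroup H] [InnerProductSpace ℝ H] [CompleteSpace H]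
    (R : H →L[ℝ] H) (hR : IsSelfAdjoint R) (hcomp : IsCompactOperator R)
    (hnonneg : ∀ x : H, 0 ≤ ⟪R x, x⟫)
    (lam : ℕ → ℝ) (hpos : ∀ i, 0 < lam i) (hmono : Antitone lam)
    (q : ℕ) (hq : 1 ≤ q) (hconst : ∀ i < q, lam i = lam 0) (hgap : lam q < lam 0)
    (φ : ℕ → H) (horth : Orthonormal ℝ φ) (heig : ∀ i, R (φ i) = lam i • φ i)
    (u : H) (hu : ‖u‖ = 1) (v w : H) (hv : R v = 0)
    (hw : HasSum (fun i => ⟪u, φ i⟫ • φ i) w) (hdecomp : u = w + v) :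
    (1 - lam q / lam 0) * ‖u - ∑ i ∈ Finset.range q, ⟪u, φ i⟫ • φ i‖ ^ 2 ≤
      1 - (lam 0)⁻¹ * ⟪R u, u⟫ := by
  have hsym : ∀ x y : H, ⟪R x, y⟫ = ⟪x, R y⟫ := fun x y =>
    hR.isSymmetric x y
  set c : ℕ → ℝ := fun i => ⟪u, φ i⟫ with hc
  -- v is orthogonal to each φ i
  have hvphi : ∀ i, ⟪v, φ i⟫ = 0 := by
    intro i
    have h1 : ⟪v, R (φ i)⟫ = 0 := by
      rw [← hsym, hv, inner_zero_left]
    rw [heig i, real_inner_smul_right] at h1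
    exact (mul_eq_zero.1 h1).resolve_left (hpos i).ne'
  have hcj : ∀ j, ⟪w, φ j⟫ = c j := by
    intro j
    have : ⟪u, φ j⟫ = ⟪w, φ j⟫ + ⟪v, φ j⟫ := by
      rw [hdecomp, inner_add_left]
    rw [hvphi j, add_zero] at this
    exact this.symm
  -- sum of squares equals ‖w‖²
  have hCsum : HasSum (fun i => c i ^ 2) (‖w‖ ^ 2) := by
    have h := (innerSL ℝ w).hasSum hw
    simp only [innerSL_apply_apply, real_inner_smul_right] at h
    have h2 : (fun b => ⟪u, φ b⟫ * ⟪w, φ b⟫) = fun i => c i ^ 2 := by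
      funext i; rw [hcj i]; ring
    rw [h2, real_inner_self_eq_norm_sq] at h
    exact h
  -- ⟪R u, u⟫ as a sum
  have hvw : ⟪v, w⟫ = 0 := by
    have h := (innerSL ℝ v).hasSum hw
    simp only [innerSL_apply_apply, real_inner_smul_right] at h
    have h0 : (fun i => c i * ⟪v, φ i⟫) = fun _ => (0 : ℝ) := by
      funext i; rw [hvphi i, mul_zero]
    rw [h0] at h
    exact (hasSum_zero.unique h).symm
  have hRu : R u = R w := by
    rw [hdecomp, map_add, hv, add_zero]
  have hAsum : HasSum (fun i => lam i * c i ^ 2) ⟪R u, u⟫ := by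
    have h1 := R.hasSum hw
    have h2 := (innerSL ℝ u).hasSum h1
    simp only [innerSL_apply_apply, map_smul, heig] at h2
    have h3 : (fun b => ⟪u, φ b⟫ • lam b • ⟪u, φ b⟫) = fun i => lam i * c i ^ 2 := by
      funext i
      simp only [smul_eq_mul]
      ring
    rw [h3] at h2
    have h4 : ⟪u, R w⟫ = ⟪R u, u⟫ := by
      rw [← hRu, real_inner_comm]
    rwa [h4] at h2
  -- ‖w‖² ≤ 1
  have hC1 : ‖w‖ ^ 2 ≤ 1 := by
    have : ‖u‖ ^ 2 = ‖w‖ ^ 2 + ‖v‖ ^ 2 := by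
      rw [hdecomp, ← real_inner_self_eq_norm_sq, ← real_inner_self_eq_norm_sq,
        ← real_inner_self_eq_norm_sq, inner_add_add_self, real_inner_comm v w, hvw]
      ring
    nlinarith [sq_nonneg ‖v‖, this, hu]
  set S : ℝ := ∑ i ∈ Finset.range q, c i ^ 2 with hS
  have hSnn : 0 ≤ S := Finset.sum_nonneg fun i _ => sq_nonneg _
  -- comparison sum g
  have hGfin : HasSum (fun i => if i < q then (lam 0 - lam q) * c i ^ 2 else 0)
      ((lam 0 - lam q) * S) := by
    have h := hasSum_sum_of_ne_finset_zero (L := SummationFilter.unconditional ℕ) (s := Finset.range q)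
      (f := fun i => if i < q then (lam 0 - lam q) * c i ^ 2 else 0)
      (by intro b hb; simp [Finset.mem_range] at hb; simp [hb])
    convert h using 1
    rw [hS, Finset.mul_sum]
    apply Finset.sum_congr rfl
    intro i hi
    simp [Finset.mem_range.1 hi]
  have hGsum : HasSum
      (fun i => lam q * c i ^ 2 + (if i < q then (lam 0 - lam q) * c i ^ 2 else 0))
      (lam q * ‖w‖ ^ 2 + (lam 0 - lam q) * S) :=
    (hCsum.mul_left (lam q)).add hGfin
  have hA_le : ⟪R u, u⟫ ≤ lam q * ‖w‖ ^ 2 + (lam 0 - lam q) * S := by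
    refine hasSum_le ?_ hAsum hGsum
    intro i
    by_cases hi : i < q
    · simp only [hi, if_true, hconst i hi]
      nlinarith [sq_nonneg (c i)]
    · simp only [hi, if_false, add_zero]
      have := hmono (Nat.le_of_not_lt hi)
      nlinarith [sq_nonneg (c i)]
  -- norm of the remainder
  have hnorm : ‖u - ∑ i ∈ Finset.range q, c i • φ i‖ ^ 2 = 1 - S := by
    rw [norm_sub_sq_real]
    have h1 : ⟪u, ∑ i ∈ Finset.range q, c i • φ i⟫ = S := by
      rw [inner_sum, hS]
      apply Finset.sum_congr rfl
      intro i _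
      rw [real_inner_smul_right]
      show c i * c i = c i ^ 2
      ring
    have h2 : ‖∑ i ∈ Finset.range q, c i • φ i‖ ^ 2 = S := by
      rw [← real_inner_self_eq_norm_sq, horth.inner_sum, hS]
      apply Finset.sum_congr rfl
      intro i _
      simp [sq]
    rw [h1, h2, hu]
    ring
  rw [hnorm]
  have hl0 : 0 < lam 0 := hpos 0
  have hlq : 0 < lam q := hpos q
  rw [div_eq_mul_inv]
  have hinv : lam 0 * (lam 0)⁻¹ = 1 := mul_inv_cancel₀ hl0.ne'
  nlinarith [mul_pos hlq (inv_pos.2 hl0), hA_le, hC1, hSnn,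
    mul_le_mul_of_nonneg_right hA_le (le_of_lt (inv_pos.2 hl0))]
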